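/- arXiv:1606.08434 — 2 statements merged into one kernel-verified Lean document; each statement's English description precedes it below -/
import Mathlib

section
/- Let n, p, q be natural numbers with n ≥ 1. Then ∑_{k=0}^{2n} (−1)^k · C(2n,k) · [C(p+k,k)·C(q+k,k)] / [C(p+2n,k)·C(q+2n,k)] · H_{p+k} = (1/2) · [C(p+n,n)·C(q+n,n)·C(1+p+q+2n,2n)] / [C(p+2n,2n)·C(q+2n,2n)·C(1+p+q+n,n)] · { H_p + H_{p+n} − H_{1+p+q+n} + H_{1+p+q+2n} }. -/
/-!
Write `(x+1)_m = (x+1)(x+2)⋯(x+m)` (`risingProd x m`).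
Clearing the binomial denominators, the summand becomes `w_k H_{p+k} / ((p+1)_{2n} (q+1)_{2n})`
with the weights `w_k = (-1)^k C(2n,k) (x+1)_k (x+1)_{2n-k} (y+1)_k (y+1)_{2n-k}` at `x = p`,
`y = q`. These weights satisfy a Dixon-type closed form
`n! ∑ w_k = (2n)! (x+1)_n (y+1)_n (x+y+n+2)_n`, proved by a Zeilberger recurrence in `n`.
Both sides are polynomials in `x`; differentiating at `x = p` replaces `(p+1)_k` by
`(p+1)_k (H_{p+k} - H_p)`, and the symmetry `w_{2n-k} = w_k` turns the resulting sum of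
`H_{p+k} + H_{p+2n-k}` into twice the sum of `H_{p+k}`.
-/

/-- Classical harmonic number `H_n = ∑_{k=1}^n 1/k`. -/
noncomputable def harm (n : ℕ) : ℝ :=
  ∑ k ∈ Finset.range n, 1 / (k + 1)

open Finset Polynomial
open scoped Nat

noncomputable def risingProd (x : ℝ) (m : ℕ) : ℝ := ∏ j ∈ range m, (x + j + 1)

section RisingProd

@[simp]
lemma risingProd_zero (x : ℝ) : risingProd x 0 = 1 := by simp [risingProd]

lemma risingProd_succ (x : ℝ) (m : ℕ) : risingProd x (m + 1) = risingProd x m * (x + m + 1) :=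
  prod_range_succ _ _

lemma risingProd_succ' (x : ℝ) (m : ℕ) : risingProd x (m + 1) = (x + 1) * risingProd (x + 1) m := by
  rw [risingProd, prod_range_succ', mul_comm, risingProd]
  push_cast
  congr 1
  · ring
  · exact prod_congr rfl fun j _ => by ring

lemma risingProd_add (x : ℝ) (m l : ℕ) :
    risingProd x (m + l) = risingProd x m * risingProd (x + m) l := by
  rw [risingProd, prod_range_add, risingProd, risingProd]
  push_cast
  exact congrArg _ (prod_congr rfl fun j _ => by ring)

lemma risingProd_pos {x : ℝ} (hx : 0 ≤ x) (m : ℕ) : 0 < risingProd x m :=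
  prod_pos fun j _ => by positivity

lemma factorial_mul_risingProd (p m : ℕ) : (p ! : ℝ) * risingProd p m = ((p + m)! : ℝ) := by
  induction m with
  | zero => simp
  | succ m ih =>
    rw [risingProd_succ, ← mul_assoc, ih, ← add_assoc, Nat.factorial_succ]
    push_cast
    ring

lemma cast_choose_mul_factorial_mul_risingProd {p m k : ℕ} (hk : k ≤ m) :
    ((p + m).choose k : ℝ) * k ! * risingProd p (m - k) = risingProd p m := by
  have h := Nat.choose_mul_factorial_mul_factorial (show k ≤ p + m by omega)
  rw [show p + m - k = p + (m - k) by omega] at h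
  have hp : (p ! : ℝ) ≠ 0 := by positivity
  apply mul_left_cancel₀ hp
  rw [factorial_mul_risingProd, ← mul_assoc, mul_comm _ (_ * _ : ℝ), mul_assoc,
    factorial_mul_risingProd]
  exact_mod_cast h

lemma cast_choose_mul_factorial (p m : ℕ) : ((p + m).choose m : ℝ) * m ! = risingProd p m := by
  simpa using cast_choose_mul_factorial_mul_risingProd (p := p) le_rfl

lemma cast_choose_eq_risingProd_div (p m : ℕ) : ((p + m).choose m : ℝ) = risingProd p m / m ! :=
  eq_div_of_mul_eq (by positivity) (cast_choose_mul_factorial p m)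

lemma cast_choose_div_cast_choose {p m k : ℕ} (hk : k ≤ m) :
    ((p + k).choose k : ℝ) / ((p + m).choose k : ℝ)
      = risingProd p k * risingProd p (m - k) / risingProd p m := by
  have hchoose : ((p + m).choose k : ℝ) ≠ 0 := by
    exact_mod_cast (Nat.choose_pos (show k ≤ p + m by omega)).ne'
  rw [div_eq_div_iff hchoose (risingProd_pos p.cast_nonneg m).ne',
    ← cast_choose_mul_factorial p k, ← cast_choose_mul_factorial_mul_risingProd hk]
  ring

end RisingProd

lemma sum_range_succ_alternating_choose_mul (m : ℕ) (a : ℕ → ℝ) :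
    ∑ k ∈ range (m + 2), (-1 : ℝ) ^ k * ((m + 1).choose k : ℝ) * a k
      = ∑ k ∈ range (m + 1), (-1 : ℝ) ^ k * (m.choose k : ℝ) * (a k - a (k + 1)) := by
  have pascal : ∑ k ∈ range (m + 1), (-1 : ℝ) ^ (k + 1) * ((m + 1).choose (k + 1) : ℝ) * a (k + 1)
      = ∑ k ∈ range (m + 1), (-1 : ℝ) ^ (k + 1) * (m.choose (k + 1) : ℝ) * a (k + 1)
        - ∑ k ∈ range (m + 1), (-1 : ℝ) ^ k * (m.choose k : ℝ) * a (k + 1) := by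
    rw [← sum_sub_distrib]
    refine sum_congr rfl fun k _ => ?_
    rw [Nat.choose_succ_succ]
    push_cast
    ring
  have top : ∑ k ∈ range (m + 2), (-1 : ℝ) ^ k * (m.choose k : ℝ) * a k
      = ∑ k ∈ range (m + 1), (-1 : ℝ) ^ k * (m.choose k : ℝ) * a k := by
    simp [sum_range_succ _ (m + 1)]
  rw [sum_range_succ', pascal, add_comm, ← add_sub_assoc]
  simp only [mul_sub, sum_sub_distrib]
  rw [← top, sum_range_succ' _ (m + 1)]
  simp [add_comm]

section Dixon

variable (n : ℕ) (x y : ℝ)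

noncomputable def dixonProd (m k : ℕ) : ℝ :=
  risingProd x k * risingProd x (m - k) * risingProd y k * risingProd y (m - k)

noncomputable def dixonWeight (k : ℕ) : ℝ :=
  (-1) ^ k * ((2 * n).choose k : ℝ) * dixonProd x y (2 * n) k

/-- Zeilberger's certificate for the recurrence `sum_dixonWeight_succ`. -/
noncomputable def dixonCertificate (k : ℕ) : ℝ :=
  (x + y + 2 * n + 3) * (2 * x + 2 * y + 4 * n + 5) * k * (-1) ^ k * ((2 * n).choose k : ℝ) *
    risingProd x k * risingProd y k * risingProd x (2 * n + 1 - k) * risingProd y (2 * n + 1 - k)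

lemma dixonWeight_reflect {k : ℕ} (hk : k ≤ 2 * n) :
    dixonWeight n x y (2 * n - k) = dixonWeight n x y k := by
  have hsign : (-1 : ℝ) ^ (2 * n - k) = (-1) ^ k := by
    calc (-1 : ℝ) ^ (2 * n - k) = (-1) ^ (2 * n - k) * ((-1) ^ k * (-1) ^ k) := by
          rw [← pow_add, ← two_mul, pow_mul]; simp
      _ = (-1) ^ k := by rw [← mul_assoc, ← pow_add, Nat.sub_add_cancel hk, pow_mul]; simp
  rw [dixonWeight, dixonWeight, dixonProd, dixonProd, hsign, Nat.choose_symm hk,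
    Nat.sub_sub_self hk]
  ring

lemma dixon_term_recurrence {k : ℕ} (hk : k ≤ 2 * n) :
    let a := dixonProd x y (2 * n + 2)
    (x + y + n + 2) * ((-1) ^ k * ((2 * n).choose k : ℝ) *
        ((a k - a (k + 1)) - (a (k + 1) - a (k + 2))))
      = 2 * (2 * n + 1) * (x + n + 1) * (y + n + 1) * (x + y + 2 * n + 2) * (x + y + 2 * n + 3) *
          dixonWeight n x y k
        + (dixonCertificate n x y (k + 1) - dixonCertificate n x y k) := by
  obtain ⟨m, hkm⟩ : ∃ m, 2 * n = k + m := ⟨2 * n - k, by omega⟩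
  have hchoose : ((k + m).choose (k + 1) : ℝ) * (k + 1) = (k + m).choose k * m := by
    have h := Nat.choose_succ_right_eq (k + m) k
    rw [show k + m - k = m by omega] at h
    exact_mod_cast h
  have hn : (n : ℝ) = (k + m) / 2 := by
    have h : ((2 * n : ℕ) : ℝ) = ((k + m : ℕ) : ℝ) := by rw [hkm]
    push_cast at h
    linarith
  simp only [dixonWeight, dixonCertificate, dixonProd, hkm,
    show k + m + 2 - k = m + 2 by omega, show k + m + 2 - (k + 1) = m + 1 by omega,
    show k + m + 2 - (k + 2) = m by omega, show k + m + 1 - k = m + 1 by omega,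
    show k + m + 1 - (k + 1) = m by omega, show k + m - k = m by omega,
    risingProd_succ, pow_succ]
  have hk1 : (k : ℝ) + 1 ≠ 0 := by positivity
  rw [← mul_left_inj' hk1, hn]
  push_cast
  linear_combination (-(x + y + (k + m) + 3) * (2 * x + 2 * y + 2 * (k + m) + 5) * (k + 1) *
    ((-1) ^ k * -1) * (risingProd x k * (x + k + 1)) * (risingProd y k * (y + k + 1)) *
    risingProd x m * risingProd y m) * hchoose

lemma sum_dixonWeight_succ :
    (x + y + n + 2) * ∑ k ∈ range (2 * (n + 1) + 1), dixonWeight (n + 1) x y k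
      = 2 * (2 * n + 1) * (x + n + 1) * (y + n + 1) * (x + y + 2 * n + 2) * (x + y + 2 * n + 3) *
          ∑ k ∈ range (2 * n + 1), dixonWeight n x y k := by
  set a := dixonProd x y (2 * n + 2)
  have reduce : ∑ k ∈ range (2 * (n + 1) + 1), dixonWeight (n + 1) x y k
      = ∑ k ∈ range (2 * n + 1), (-1) ^ k * ((2 * n).choose k : ℝ) *
          ((a k - a (k + 1)) - (a (k + 1) - a (k + 2))) := by
    rw [← sum_range_succ_alternating_choose_mul (2 * n) (fun k => a k - a (k + 1)),
      ← sum_range_succ_alternating_choose_mul (2 * n + 1) a]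
    rfl
  have hlast : dixonCertificate n x y (2 * n + 1) = 0 := by
    simp [dixonCertificate, Nat.choose_succ_self]
  have hfirst : dixonCertificate n x y 0 = 0 := by simp [dixonCertificate]
  rw [reduce, mul_sum, sum_congr rfl fun k hk =>
      dixon_term_recurrence n x y (Nat.lt_succ_iff.mp (mem_range.mp hk)),
    sum_add_distrib, sum_range_sub, hlast, hfirst, ← mul_sum]
  ring

lemma factorial_mul_sum_dixonWeight (hxy : 0 ≤ x + y) :
    (n ! : ℝ) * ∑ k ∈ range (2 * n + 1), dixonWeight n x y k
      = (2 * n)! * (risingProd x n * risingProd y n * risingProd (x + y + n + 1) n) := by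
  induction n with
  | zero => simp [dixonWeight, dixonProd]
  | succ n ih =>
    have hpos : 0 < x + y + n + 2 := by positivity
    have shift : (x + y + n + 2) * risingProd (x + y + n + 1 + 1) (n + 1)
        = risingProd (x + y + n + 1) n * ((x + y + 2 * n + 2) * (x + y + 2 * n + 3)) := by
      have h := risingProd_succ' (x + y + n + 1) (n + 1)
      rw [risingProd_succ, risingProd_succ] at h
      push_cast at h
      linear_combination -h
    apply mul_left_cancel₀ hpos.ne'
    rw [mul_left_comm, sum_dixonWeight_succ, Nat.factorial_succ,
      show 2 * (n + 1) = 2 * n + 1 + 1 by ring, Nat.factorial_succ, Nat.factorial_succ,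
      risingProd_succ x, risingProd_succ y,
      show x + y + ((n + 1 : ℕ) : ℝ) + 1 = x + y + n + 1 + 1 by push_cast; ring]
    push_cast
    linear_combination
      (n + 1) * (2 * (2 * n + 1) * (x + n + 1) * (y + n + 1) * (x + y + 2 * n + 2) *
        (x + y + 2 * n + 3)) * ih
      - (2 * n + 2) * (2 * n + 1) * ((2 * n)! : ℝ) * risingProd x n * risingProd y n *
        (x + n + 1) * (y + n + 1) * shift

end Dixon

lemma harm_add_sub (N m : ℕ) : harm (N + m) - harm N = ∑ j ∈ range m, ((N : ℝ) + j + 1)⁻¹ := by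
  induction m with
  | zero => simp
  | succ m ih =>
    rw [← add_assoc, harm, sum_range_succ, ← harm, sum_range_succ, ← ih]
    push_cast
    ring

section RisingPoly

noncomputable def risingPoly (a : ℝ) (m : ℕ) : ℝ[X] := ∏ j ∈ range m, (X + C (a + j + 1))

lemma eval_risingPoly (a x : ℝ) (m : ℕ) : (risingPoly a m).eval x = risingProd (x + a) m := by
  rw [risingPoly, eval_prod, risingProd]
  exact prod_congr rfl fun j _ => by simp; ring

lemma eval_derivative_risingPoly {a x : ℝ} (h : 0 ≤ x + a) (m : ℕ) :
    (derivative (risingPoly a m)).eval x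
      = risingProd (x + a) m * ∑ j ∈ range m, (x + a + j + 1)⁻¹ := by
  induction m with
  | zero => simp [risingPoly]
  | succ m ih =>
    have hm : x + a + m + 1 ≠ 0 := by positivity
    rw [risingPoly, prod_range_succ, ← risingPoly, derivative_mul, eval_add, eval_mul, eval_mul, ih,
      eval_risingPoly, risingProd_succ, sum_range_succ]
    simp only [derivative_add, derivative_X, derivative_C, add_zero, eval_one, eval_add, eval_X,
      eval_C]
    field_simp
    ring

lemma eval_derivative_risingPoly_of_add_eq_natCast {a x : ℝ} {N : ℕ} (h : x + a = N) (m : ℕ) :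
    (derivative (risingPoly a m)).eval x = risingProd N m * (harm (N + m) - harm N) := by
  rw [eval_derivative_risingPoly (h ▸ N.cast_nonneg) m, harm_add_sub, h]

end RisingPoly

lemma dixon_polynomial_identity (n : ℕ) {y : ℝ} (hy : 0 ≤ y) :
    C (n ! : ℝ) * ∑ k ∈ range (2 * n + 1),
        C ((-1) ^ k * ((2 * n).choose k : ℝ) * (risingProd y k * risingProd y (2 * n - k))) *
          (risingPoly 0 k * risingPoly 0 (2 * n - k))
      = C ((2 * n)! * risingProd y n) * (risingPoly 0 n * risingPoly (y + n + 1) n) := by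
  refine eq_of_infinite_eval_eq _ _ (Set.Infinite.mono (fun x (hx : 0 ≤ x) => ?_) (Set.Ici_infinite 0))
  have h := factorial_mul_sum_dixonWeight n x y (by positivity)
  simp only [dixonWeight, dixonProd] at h
  simp only [Set.mem_ofPred_eq, eval_mul, eval_C, eval_finsetSum, eval_risingPoly, add_zero]
  rw [show x + (y + n + 1) = x + y + n + 1 by ring]
  convert h using 1
  · exact congrArg _ (sum_congr rfl fun k _ => by ring)
  · ring

lemma factorial_mul_sum_dixonWeight_mul_harm (n p q : ℕ) :
    (n ! : ℝ) * ∑ k ∈ range (2 * n + 1),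
        dixonWeight n p q k * ((harm (p + k) - harm p) + (harm (p + (2 * n - k)) - harm p))
      = (2 * n)! * (risingProd p n * risingProd q n * risingProd (p + q + n + 1 : ℕ) n) *
          ((harm (p + n) - harm p) + (harm (p + q + n + 1 + n) - harm (p + q + n + 1))) := by
  have h := congrArg (fun f => (derivative f).eval (p : ℝ))
    (dixon_polynomial_identity n (Nat.cast_nonneg q))
  have hN : (p : ℝ) + ((q : ℝ) + n + 1) = (p + q + n + 1 : ℕ) := by push_cast; ring
  simp only [derivative_sum, derivative_mul, derivative_C, zero_mul, zero_add,
    eval_mul, eval_add, eval_C, eval_finsetSum, eval_risingPoly, add_zero, hN,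
    eval_derivative_risingPoly_of_add_eq_natCast (add_zero _),
    eval_derivative_risingPoly_of_add_eq_natCast hN] at h
  simp only [dixonWeight, dixonProd]
  convert h using 1
  · exact congrArg _ (sum_congr rfl fun k _ => by ring)
  · ring

lemma two_mul_sum_range_mul_of_reflect {R : Type*} [CommSemiring R] {f g : ℕ → R} {m : ℕ}
    (hf : ∀ k ≤ m, f (m - k) = f k) :
    2 * ∑ k ∈ range (m + 1), f k * g k = ∑ k ∈ range (m + 1), f k * (g k + g (m - k)) := by
  have reflect : ∑ k ∈ range (m + 1), f k * g k = ∑ k ∈ range (m + 1), f k * g (m - k) := by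
    rw [← sum_range_reflect]
    refine sum_congr rfl fun k hk => ?_
    have hk : k ≤ m := Nat.lt_succ_iff.mp (mem_range.mp hk)
    rw [Nat.add_sub_cancel, hf k hk]
  rw [two_mul]
  nth_rewrite 2 [reflect]
  rw [← sum_add_distrib]
  exact sum_congr rfl fun k _ => (mul_add _ _ _).symm

lemma two_mul_sum_dixonWeight_mul_harm (n p q : ℕ) :
    2 * ∑ k ∈ range (2 * n + 1), dixonWeight n p q k * harm (p + k)
      = (∑ k ∈ range (2 * n + 1), dixonWeight n p q k) *
          (harm p + harm (p + n) - harm (1 + p + q + n) + harm (1 + p + q + 2 * n)) := by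
  rw [two_mul_sum_range_mul_of_reflect fun k hk => dixonWeight_reflect n p q hk]
  have centre : ∑ k ∈ range (2 * n + 1), dixonWeight n p q k * (harm (p + k) + harm (p + (2 * n - k)))
      = ∑ k ∈ range (2 * n + 1),
          dixonWeight n p q k * ((harm (p + k) - harm p) + (harm (p + (2 * n - k)) - harm p))
        + 2 * harm p * ∑ k ∈ range (2 * n + 1), dixonWeight n p q k := by
    rw [mul_sum, ← sum_add_distrib]
    exact sum_congr rfl fun k _ => by ring
  have harmonic := factorial_mul_sum_dixonWeight_mul_harm n p q
  have closed := factorial_mul_sum_dixonWeight n (p : ℝ) q (by positivity)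
  rw [show p + q + n + 1 + n = 1 + p + q + 2 * n by ring, show p + q + n + 1 = 1 + p + q + n by ring]
    at harmonic
  rw [show (p : ℝ) + q + n + 1 = ((1 + p + q + n : ℕ) : ℝ) by push_cast; ring] at closed
  apply mul_left_cancel₀ (show (n ! : ℝ) ≠ 0 by positivity)
  rw [centre]
  linear_combination harmonic
    - ((harm (p + n) - harm p) + (harm (1 + p + q + 2 * n) - harm (1 + p + q + n))) * closed

lemma summand_eq_dixonWeight_div {n p q k : ℕ} (hk : k ≤ 2 * n) :
    (-1 : ℝ) ^ k * ((2 * n).choose k : ℝ) *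
        (((p + k).choose k : ℝ) * ((q + k).choose k : ℝ)) /
        (((p + 2 * n).choose k : ℝ) * ((q + 2 * n).choose k : ℝ)) * harm (p + k)
      = dixonWeight n p q k * harm (p + k) / (risingProd p (2 * n) * risingProd q (2 * n)) := by
  rw [mul_div_assoc, mul_div_mul_comm, cast_choose_div_cast_choose hk,
    cast_choose_div_cast_choose hk, dixonWeight, dixonProd]
  ring

lemma binomial_coefficient_eq_sum_dixonWeight_div (n p q : ℕ) :
    (((p + n).choose n : ℝ) * ((q + n).choose n : ℝ) *
          ((1 + p + q + 2 * n).choose (2 * n) : ℝ)) /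
        (((p + 2 * n).choose (2 * n) : ℝ) * ((q + 2 * n).choose (2 * n) : ℝ) *
          ((1 + p + q + n).choose n : ℝ))
      = (∑ k ∈ range (2 * n + 1), dixonWeight n p q k) /
          (risingProd p (2 * n) * risingProd q (2 * n)) := by
  have closed := factorial_mul_sum_dixonWeight n (p : ℝ) q (by positivity)
  rw [show (p : ℝ) + q + n + 1 = ((p + q + 1 : ℕ) : ℝ) + n by push_cast; ring] at closed
  have split : risingProd ((p + q + 1 : ℕ) : ℝ) (2 * n)
      = risingProd (p + q + 1 : ℕ) n * risingProd ((p + q + 1 : ℕ) + n : ℝ) n := by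
    rw [two_mul, risingProd_add]
  rw [show 1 + p + q + 2 * n = (p + q + 1) + 2 * n by ring,
    show 1 + p + q + n = (p + q + 1) + n by ring]
  have hS : ∑ k ∈ range (2 * n + 1), dixonWeight n p q k
      = (2 * n)! * (risingProd p n * risingProd q n * risingProd ((p + q + 1 : ℕ) + n : ℝ) n) / n ! :=
    eq_div_of_mul_eq (by positivity) (by rw [mul_comm, closed])
  have hp := (risingProd_pos p.cast_nonneg n).ne'
  have hp2 := (risingProd_pos p.cast_nonneg (2 * n)).ne'
  have hq := (risingProd_pos q.cast_nonneg n).ne'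
  have hq2 := (risingProd_pos q.cast_nonneg (2 * n)).ne'
  have hN := (risingProd_pos (p + q + 1 : ℕ).cast_nonneg n).ne'
  simp only [cast_choose_eq_risingProd_div, hS, split]
  field_simp

theorem stmt1_general (n p q : ℕ) :
    ∑ k ∈ Finset.range (2 * n + 1), (-1 : ℝ) ^ k * ((2 * n).choose k : ℝ) *
        (((p + k).choose k : ℝ) * ((q + k).choose k : ℝ)) /
        (((p + 2 * n).choose k : ℝ) * ((q + 2 * n).choose k : ℝ)) * harm (p + k)
    = (1 / 2) *
        (((p + n).choose n : ℝ) * ((q + n).choose n : ℝ) *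
          ((1 + p + q + 2 * n).choose (2 * n) : ℝ)) /
        (((p + 2 * n).choose (2 * n) : ℝ) * ((q + 2 * n).choose (2 * n) : ℝ) *
          ((1 + p + q + n).choose n : ℝ)) *
        (harm p + harm (p + n) - harm (1 + p + q + n) + harm (1 + p + q + 2 * n)) := by
  rw [sum_congr rfl fun k hk => summand_eq_dixonWeight_div (Nat.lt_succ_iff.mp (mem_range.mp hk)),
    ← sum_div, mul_div_assoc, binomial_coefficient_eq_sum_dixonWeight_div]
  linear_combination two_mul_sum_dixonWeight_mul_harm n p q /
    (2 * (risingProd p (2 * n) * risingProd q (2 * n)))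

theorem stmt1 (n p q : ℕ) (hn : 1 ≤ n) :
    ∑ k ∈ Finset.range (2 * n + 1), (-1 : ℝ) ^ k * ((2 * n).choose k : ℝ) *
        (((p + k).choose k : ℝ) * ((q + k).choose k : ℝ)) /
        (((p + 2 * n).choose k : ℝ) * ((q + 2 * n).choose k : ℝ)) * harm (p + k)
    = (1 / 2) *
        (((p + n).choose n : ℝ) * ((q + n).choose n : ℝ) *
          ((1 + p + q + 2 * n).choose (2 * n) : ℝ)) /
        (((p + 2 * n).choose (2 * n) : ℝ) * ((q + 2 * n).choose (2 * n) : ℝ) *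
          ((1 + p + q + n).choose n : ℝ)) *
        (harm p + harm (p + n) - harm (1 + p + q + n) + harm (1 + p + q + 2 * n)) :=
  stmt1_general n p q
end

section
/- For every positive integer n, ∑_{k=0}^{2n} (−1)^k / C(2n,k) · H_k^2 = (1+2n)/(2+2n) · { H_{1+2n}^2 − H_{1+2n}/(1+n) − H_{1+2n}^{(2)} + H_{1+n}^{(2)} }. -/
/-- Second-order harmonic number `H_n^{(2)} = ∑_{k=1}^n 1/k^2`. -/
noncomputable def harm2 (n : ℕ) : ℝ :=
  ∑ k ∈ Finset.range n, 1 / (k + 1) ^ 2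

/-!
The partial sums up to `M ≤ N` of `∑ (-1)^k / C(N,k)` and of `∑ (-1)^k H_k^2 / C(N,k)` have
closed forms (the latter up to a remainder `(N+2)⁻¹ ∑ (-1)^k / ((k+1) C(N,k))`), each checked by
induction on `M` through `C(N,M+1) = C(N,M) (N-M)/(M+1)`. The remainder sum obeys a recursion in
`N`, coming from `C(N+1,k) = (N+1) C(N,k)/(N+1-k)`, which evaluates it as
`(N+1) (2 A_{N+1} - H^{(2)}_{N+1})` with `A` the alternating second-order harmonic sum; for even
`N = 2n` one has `A_{2n+1} = H^{(2)}_{2n+1} - H^{(2)}_n / 2`.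
-/

open Finset

noncomputable def altHarm2 (n : ℕ) : ℝ :=
  ∑ k ∈ range n, (-1 : ℝ) ^ k / (k + 1) ^ 2

lemma harm_succ (m : ℕ) : harm (m + 1) = harm m + 1 / (m + 1) := by
  simp [harm, sum_range_succ]

lemma harm2_succ (m : ℕ) : harm2 (m + 1) = harm2 m + 1 / (m + 1) ^ 2 := by
  simp [harm2, sum_range_succ]

lemma altHarm2_succ (m : ℕ) : altHarm2 (m + 1) = altHarm2 m + (-1 : ℝ) ^ m / (m + 1) ^ 2 := by
  simp [altHarm2, sum_range_succ]

lemma altHarm2_two_mul_add_one (n : ℕ) :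
    altHarm2 (2 * n + 1) = harm2 (2 * n + 1) - harm2 n / 2 := by
  induction n with
  | zero => simp [altHarm2, harm2]
  | succ n ih =>
    have hodd : (-1 : ℝ) ^ (2 * n + 1) = -1 := (odd_two_mul_add_one n).neg_one_pow
    have heven : (-1 : ℝ) ^ (2 * n + 2) = 1 := Even.neg_one_pow ⟨n + 1, by ring⟩
    rw [show 2 * (n + 1) + 1 = 2 * n + 1 + 1 + 1 by ring, altHarm2_succ, altHarm2_succ, ih,
      harm2_succ (2 * n + 1 + 1), harm2_succ (2 * n + 1), harm2_succ n, hodd, heven]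
    push_cast
    field_simp
    ring

lemma cast_choose_ne_zero {N k : ℕ} (h : k ≤ N) : (N.choose k : ℝ) ≠ 0 :=
  Nat.cast_ne_zero.mpr (Nat.choose_pos h).ne'

lemma cast_choose_succ_right {N M : ℕ} (h : M < N) :
    (N.choose (M + 1) : ℝ) = N.choose M * (N - M) / (M + 1) := by
  have key := congrArg (Nat.cast : ℕ → ℝ) (Nat.choose_succ_right_eq N M)
  push_cast [Nat.cast_sub h.le] at key
  rw [← key]
  field_simp

lemma cast_choose_succ_left {m k : ℕ} (h : k ≤ m) :
    ((m + 1).choose k : ℝ) = (m + 1) * m.choose k / (m + 1 - k) := by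
  have key := congrArg (Nat.cast : ℕ → ℝ) (Nat.choose_mul_succ_eq m k)
  push_cast [Nat.cast_sub (h.trans m.le_succ)] at key
  have hmk : (m + 1 - k : ℝ) ≠ 0 := by
    have : (k : ℝ) ≤ m := by exact_mod_cast h
    linarith
  rw [mul_comm _ (m.choose k : ℝ), key]
  field_simp

lemma sum_range_alternating_inv_choose_of_le {N M : ℕ} (hM : M ≤ N) :
    ∑ k ∈ range (M + 1), (-1 : ℝ) ^ k / N.choose k
      = (N + 1) / (N + 2) + (-1 : ℝ) ^ M * (M + 1) / ((N + 2) * N.choose M) := by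
  induction M with
  | zero =>
    simp only [zero_add, sum_range_one, pow_zero, Nat.choose_zero_right, Nat.cast_zero,
      Nat.cast_one, div_one, mul_one]
    field_simp
    ring
  | succ M ih =>
    have hMN : M < N := hM
    have hNM : (N - M : ℝ) ≠ 0 := sub_ne_zero.mpr (by exact_mod_cast hMN.ne')
    have hc := cast_choose_ne_zero hMN.le
    rw [sum_range_succ, ih hMN.le, cast_choose_succ_right hMN, pow_succ]
    push_cast
    field_simp
    ring

lemma sum_range_alternating_inv_choose (N : ℕ) :
    ∑ k ∈ range (N + 1), (-1 : ℝ) ^ k / N.choose k = (N + 1) / (N + 2) * (1 + (-1 : ℝ) ^ N) := by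
  rw [sum_range_alternating_inv_choose_of_le le_rfl, Nat.choose_self, Nat.cast_one]
  field_simp

lemma sum_range_alternating_inv_succ_mul_choose (m : ℕ) :
    ∑ k ∈ range (m + 1), (-1 : ℝ) ^ k / ((k + 1) * m.choose k)
      = (m + 1) * (2 * altHarm2 (m + 1) - harm2 (m + 1)) := by
  induction m with
  | zero =>
    norm_num [altHarm2, harm2]
  | succ m ih =>
    have recursion : ∀ k ∈ range (m + 1),
        (-1 : ℝ) ^ k / ((k + 1) * (m + 1).choose k)
          = (m + 2) / (m + 1) * ((-1 : ℝ) ^ k / ((k + 1) * m.choose k))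
            - 1 / (m + 1) * ((-1 : ℝ) ^ k / m.choose k) := by
      intro k hk
      have hkm : k ≤ m := Nat.lt_succ_iff.mp (mem_range.mp hk)
      have hc := cast_choose_ne_zero hkm
      have hmk : (m + 1 - k : ℝ) ≠ 0 := by
        have : (k : ℝ) ≤ m := by exact_mod_cast hkm
        linarith
      rw [cast_choose_succ_left hkm]
      field_simp
      ring
    rw [sum_range_succ, sum_congr rfl recursion, sum_sub_distrib, ← mul_sum, ← mul_sum, ih,
      sum_range_alternating_inv_choose, Nat.choose_self, Nat.cast_one, altHarm2_succ (m + 1),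
      harm2_succ (m + 1), altHarm2_succ m, harm2_succ m, pow_succ]
    push_cast
    field_simp
    ring

lemma sum_range_alternating_inv_succ_mul_choose_two_mul (n : ℕ) :
    ∑ k ∈ range (2 * n + 1), (-1 : ℝ) ^ k / ((k + 1) * (2 * n).choose k)
      = (2 * n + 1) * (harm2 (2 * n + 1) - harm2 n) := by
  rw [sum_range_alternating_inv_succ_mul_choose, altHarm2_two_mul_add_one]
  push_cast
  ring

lemma sum_range_alternating_sq_harm_div_choose_of_le {N M : ℕ} (hM : M ≤ N) :
    ∑ k ∈ range (M + 1), (-1 : ℝ) ^ k / N.choose k * harm k ^ 2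
      = 2 * (N + 1) / (N + 2) ^ 3
        - 1 / (N + 2) * ∑ k ∈ range (M + 1), (-1 : ℝ) ^ k / ((k + 1) * N.choose k)
        + (-1 : ℝ) ^ M / N.choose M *
          ((M + 1) * harm M ^ 2 / (N + 2) + 2 * (N + 1 - M) * harm M / (N + 2) ^ 2
            - 2 * (N + 1 - M) / (N + 2) ^ 3 + 1 / ((M + 1) * (N + 2))) := by
  induction M with
  | zero =>
    simp [harm]
  | succ M ih =>
    have hMN : M < N := hM
    have hNM : (N - M : ℝ) ≠ 0 := sub_ne_zero.mpr (by exact_mod_cast hMN.ne')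
    have hc := cast_choose_ne_zero hMN.le
    rw [sum_range_succ, ih hMN.le, sum_range_succ (n := M + 1), cast_choose_succ_right hMN,
      harm_succ, pow_succ]
    push_cast
    field_simp
    ring

theorem stmt4_general (n : ℕ) :
    ∑ k ∈ Finset.range (2 * n + 1), (-1 : ℝ) ^ k / ((2 * n).choose k : ℝ) * (harm k) ^ 2
    = ((1 + 2 * n : ℝ) / (2 + 2 * n)) *
        ((harm (1 + 2 * n)) ^ 2 - harm (1 + 2 * n) / (1 + n)
          - harm2 (1 + 2 * n) + harm2 (1 + n)) := by
  rw [sum_range_alternating_sq_harm_div_choose_of_le le_rfl,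
    sum_range_alternating_inv_succ_mul_choose_two_mul, Nat.choose_self, Nat.cast_one, pow_mul,
    add_comm 1 (2 * n), add_comm 1 n, harm_succ, harm2_succ, harm2_succ]
  push_cast
  field_simp
  ring

theorem stmt4 (n : ℕ) (hn : 0 < n) :
    ∑ k ∈ Finset.range (2 * n + 1), (-1 : ℝ) ^ k / ((2 * n).choose k : ℝ) * (harm k) ^ 2
    = ((1 + 2 * n : ℝ) / (2 + 2 * n)) *
        ((harm (1 + 2 * n)) ^ 2 - harm (1 + 2 * n) / (1 + n)
          - harm2 (1 + 2 * n) + harm2 (1 + n)) :=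
  stmt4_general n
end
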